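/- Let γ > 0. For all real numbers x, y, j, m with 0 ≤ x ≤ j and 0 ≤ m ≤ y, one has x^γ (x+y)^γ (j+m)^γ + x^γ j^γ (j+m)^γ − j^γ (x+y)^γ (j+m)^γ − x^γ j^γ (x+y)^γ ≤ 0. -/

import Mathlib

open MeasureTheory Set Real
open scoped ENNReal RealInnerProductSpace

noncomputable section

abbrev Eu (n : ℕ) := EuclideanSpace ℝ (Fin n)

/-- A smooth test function compactly supported in `Ω`. -/
def TestFun {n : ℕ} (Ω : Set (Eu n)) (φ : Eu n → ℝ) : Prop :=
  ContDiff ℝ (⊤ : ℕ∞) φ ∧ HasCompactSupport φ ∧ tsupport φ ⊆ Ω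

/-- `G` is a weak gradient of `u` on `Ω`. -/
def IsWeakGradOn {n : ℕ} (Ω : Set (Eu n)) (u : Eu n → ℝ) (G : Eu n → Eu n) : Prop :=
  ∀ φ : Eu n → ℝ, TestFun Ω φ → ∀ i : Fin n,
    (∫ x in Ω, u x * fderiv ℝ φ x (EuclideanSpace.single i 1)) =
      - ∫ x in Ω, G x i * φ x

/-- `u ∈ H¹_loc(Ω)`, with weak gradient `G ∈ L²_loc(Ω)`, and `u ∈ L¹_loc(Ω)`. -/
def MemH1loc {n : ℕ} (Ω : Set (Eu n)) (u : Eu n → ℝ) (G : Eu n → Eu n) : Prop :=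
  IsWeakGradOn Ω u G ∧
  ∀ K : Set (Eu n), IsCompact K → K ⊆ Ω →
    IntegrableOn u K ∧ IntegrableOn (fun x => ‖G x‖ ^ 2) K

/-- `u ∈ H¹₀(Ω)` with global weak gradient `G`. -/
def MemH10 {n : ℕ} (Ω : Set (Eu n)) (u : Eu n → ℝ) (G : Eu n → Eu n) : Prop :=
  MemLp u 2 (volume : Measure (Eu n)) ∧
  Integrable (fun x => ‖G x‖ ^ 2) (volume : Measure (Eu n)) ∧
  IsWeakGradOn univ u G ∧ (∀ᵐ x : Eu n, x ∉ Ω → u x = 0)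

def InH10 {n : ℕ} (Ω : Set (Eu n)) (u : Eu n → ℝ) : Prop :=
  ∃ G, MemH10 Ω u G

/-- `u ≤ 0` on `∂Ω`. -/
def LeZeroBdry {n : ℕ} (Ω : Set (Eu n)) (u : Eu n → ℝ) : Prop :=
  ∀ ε : ℝ, 0 < ε → InH10 Ω (fun x => max (u x - ε) 0)

/-- The Gagliardo-type bilinear form `∬ B(u)B(v) dν`. -/
def nuForm (n : ℕ) (s : ℝ) (u v : Eu n → ℝ) : ℝ :=
  ∫ p : Eu n × Eu n,
    (u p.1 - u p.2) * (v p.1 - v p.2) * ‖p.1 - p.2‖ ^ (-((n : ℝ) + 2 * s))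

/-- `∫_Ω G·∇φ` where `∇φ` is the classical gradient of the test function `φ`. -/
def dirFormT {n : ℕ} (Ω : Set (Eu n)) (G : Eu n → Eu n) (φ : Eu n → ℝ) : ℝ :=
  ∫ x in Ω, ∑ i, G x i * fderiv ℝ φ x (EuclideanSpace.single i 1)

/-- `u` is a weak solution of `-Δu + (-Δ)ˢ u = u^{-γ} + g` in `Ω`, `u > 0` in `Ω`,
`u = 0` outside `Ω` (and `u = 0` on `∂Ω` in the singular sense). -/
def IsWeakSol (n : ℕ) (s γ : ℝ) (Ω : Set (Eu n)) (u : Eu n → ℝ)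
    (G : Eu n → Eu n) (g : Eu n → ℝ) : Prop :=
  MemH1loc Ω u G ∧ IntegrableOn u Ω ∧
  (∀ᵐ x : Eu n, x ∉ Ω → u x = 0) ∧
  (∀ᵐ x ∂(volume.restrict Ω), 0 < u x) ∧
  (∀ᵐ x : Eu n, 0 ≤ u x) ∧
  LeZeroBdry Ω u ∧
  (∀ K : Set (Eu n), IsCompact K → K ⊆ Ω → IntegrableOn (fun x => u x ^ (-γ)) K) ∧
  ∀ φ : Eu n → ℝ, TestFun Ω φ →
    dirFormT Ω G φ + nuForm n s u φ
      = (∫ x in Ω, u x ^ (-γ) * φ x) + ∫ x in Ω, g x * φ x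

/-- `inf_K u₀ > 0` for every compact `K ⊆ Ω`. -/
def PosOnCompacts {n : ℕ} (Ω : Set (Eu n)) (u₀ : Eu n → ℝ) : Prop :=
  ∀ K : Set (Eu n), IsCompact K → K ⊆ Ω → K.Nonempty → ∃ c > 0, ∀ x ∈ K, c ≤ u₀ x

/-- Hypothesis (A) on the perturbation `℘`. -/
def HypA (p : ℝ → ℝ) : Prop :=
  LocallyLipschitz p ∧ Monotone p ∧ (∀ t : ℝ, 0 < t → 0 < p t) ∧ 0 ≤ p 0

/-- the half space `Σ_λ` of the moving plane method -/
def Sig (n : ℕ) [NeZero n] (lam : ℝ) : Set (Eu n) :=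
  if lam ≤ 0 then {x | x 0 < lam} else {x | lam < x 0}

/-- reflection about the hyperplane `{x₁ = λ}` -/
def Rfl {n : ℕ} [NeZero n] (lam : ℝ) (x : Eu n) : Eu n :=
  (EuclideanSpace.equiv (Fin n) ℝ).symm (fun i => if i = 0 then 2 * lam - x 0 else x i)

/-- the critical value `λ*` of the moving plane method -/
def lamStar (n : ℕ) [NeZero n] (Ω : Set (Eu n)) : ℝ :=
  sSup {lam : ℝ | -1 < lam ∧
    ∀ μ : ℝ, -1 < μ → μ ≤ lam → ∀ x ∈ Ω ∩ Sig n μ, Rfl μ x ∈ Ω}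


private lemma aux_anti (γ : ℝ) (hγ : 0 < γ) (m : ℝ) (hm : 0 ≤ m) {a b : ℝ} (ha : 0 < a) (hab : a ≤ b) :
    b ^ (-γ) - (b + m) ^ (-γ) ≤ a ^ (-γ) - (a + m) ^ (-γ) := by
  have hanti : AntitoneOn (fun t : ℝ => t ^ (-γ) - (t + m) ^ (-γ)) (Ici a) := by
    have hder : ∀ t ∈ interior (Ici a),
        HasDerivAt (fun t : ℝ => t ^ (-γ) - (t + m) ^ (-γ))
          (-γ * t ^ (-γ - 1) - 1 * (-γ) * (t + m) ^ (-γ - 1)) t := by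
      intro t ht
      rw [interior_Ici] at ht
      have ht0 : 0 < t := ha.trans ht
      have htm : 0 < t + m := by linarith
      exact (Real.hasDerivAt_rpow_const (Or.inl ht0.ne')).sub
        (((hasDerivAt_id t).add_const m).rpow_const (Or.inl htm.ne'))
    apply antitoneOn_of_deriv_nonpos (convex_Ici a)
    · apply ContinuousOn.sub
      · exact ContinuousOn.rpow_const continuousOn_id fun t ht =>
          Or.inl (ne_of_gt (lt_of_lt_of_le ha ht))
      · exact ContinuousOn.rpow_const (continuousOn_id.add continuousOn_const) fun t ht =>
          Or.inl (by have := lt_of_lt_of_le ha ht; positivity)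
    · exact fun t ht => (hder t ht).differentiableAt.differentiableWithinAt
    · intro t ht
      rw [(hder t ht).deriv]
      rw [interior_Ici] at ht
      have ht0 : 0 < t := ha.trans ht
      have htm : 0 < t + m := by linarith
      have : (t + m) ^ (-γ - 1) ≤ t ^ (-γ - 1) :=
        Real.rpow_le_rpow_of_nonpos ht0 (by linarith) (by linarith)
      nlinarith
  exact hanti (self_mem_Ici) hab hab

/-- Lemma 4.1: the algebraic inequality `ℜ_γ ≤ 0` on
`U = {0 ≤ x ≤ j, 0 ≤ m ≤ y}`. -/
theorem algebraic_lemma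
    (γ : ℝ) (hγ : 0 < γ) (x y j m : ℝ)
    (hx : 0 ≤ x) (hxj : x ≤ j) (hm : 0 ≤ m) (hmy : m ≤ y) :
    x ^ γ * (x + y) ^ γ * (j + m) ^ γ + x ^ γ * j ^ γ * (j + m) ^ γ
      - j ^ γ * (x + y) ^ γ * (j + m) ^ γ - x ^ γ * j ^ γ * (x + y) ^ γ ≤ 0 := by

  rcases eq_or_lt_of_le hx with hx0 | hx0
  · subst hx0
    rw [Real.zero_rpow hγ.ne']
    have h1 : 0 ≤ j ^ γ := Real.rpow_nonneg (by linarith) _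
    have h2 : 0 ≤ (0 + y) ^ γ := Real.rpow_nonneg (by linarith) _
    have h3 : 0 ≤ (j + m) ^ γ := Real.rpow_nonneg (by linarith) _
    nlinarith [mul_nonneg (mul_nonneg h1 h2) h3]
  · have hj : 0 < j := lt_of_lt_of_le hx0 hxj
    have hxy : 0 < x + y := by linarith
    have hjm : 0 < j + m := by linarith
    -- key: j^{-γ} - (j+m)^{-γ} ≤ x^{-γ} - (x+y)^{-γ}
    have key : j ^ (-γ) - (j + m) ^ (-γ) ≤ x ^ (-γ) - (x + y) ^ (-γ) := by
      have h1 := aux_anti γ hγ m hm hx0 hxj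
      have h2 : (x + y) ^ (-γ) ≤ (x + m) ^ (-γ) :=
        Real.rpow_le_rpow_of_nonpos (by linarith) (by linarith) (by linarith)
      linarith
    have ea : x ^ (-γ) = (x ^ γ)⁻¹ := by rw [Real.rpow_neg hx0.le]
    have eb : j ^ (-γ) = (j ^ γ)⁻¹ := by rw [Real.rpow_neg hj.le]
    have ec : (x + y) ^ (-γ) = ((x + y) ^ γ)⁻¹ := by rw [Real.rpow_neg hxy.le]
    have ed : (j + m) ^ (-γ) = ((j + m) ^ γ)⁻¹ := by rw [Real.rpow_neg hjm.le]
    rw [ea, eb, ec, ed] at key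
    have pa : 0 < x ^ γ := Real.rpow_pos_of_pos hx0 _
    have pb : 0 < j ^ γ := Real.rpow_pos_of_pos hj _
    have pc : 0 < (x + y) ^ γ := Real.rpow_pos_of_pos hxy _
    have pd : 0 < (j + m) ^ γ := Real.rpow_pos_of_pos hjm _
    set a := x ^ γ; set b := j ^ γ; set c := (x + y) ^ γ; set d := (j + m) ^ γ
    have k1 : b⁻¹ - d⁻¹ = (d - b) / (b * d) := by field_simp
    have k2 : a⁻¹ - c⁻¹ = (c - a) / (a * c) := by field_simp
    rw [k1, k2, div_le_div_iff₀ (by positivity) (by positivity)] at key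
    nlinarith [key]


end
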